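/- Let h ∈ L^{4/3}(ℝ³) be nonnegative and suppose there is a constant c such that for all x₀ ∈ ℝ³ and R > 0, (1/|B(R/2)|) ∫_{B(x₀,R/2)} h^{4/3} dx ≤ c ( (1/|B(R)|) ∫_{B(x₀,R)} h dx )^{4/3}. Then h = 0 almost everywhere. -/

import Mathlib

/-! By Hölder's inequality, a nonnegative `h ∈ L^p` with conjugate exponent `q` satisfies
`∫_{B_R} h = o(|B_R|^{1/q})` as `R → ∞`: the part of `h` on a fixed set of finite measure
contributes `O(1)`, and the rest has small `L^p` norm. Fed into the reverse Hölder inequality on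
`B(x₀, R) ⊂ B(x₀, 2R)`, this forces `∫_{B(x₀, R)} h^p → 0`, hence `∫ h^p = 0`. -/

open MeasureTheory Metric Real Filter

noncomputable section

abbrev E3 := EuclideanSpace ℝ (Fin 3)

/-- The `i`-th standard basis vector of `ℝ³`. -/
def e3 (i : Fin 3) : E3 := EuclideanSpace.single i 1

/-- A vector field is divergence free. -/
def DivFree (u : E3 → E3) : Prop := ∀ x, ∑ i, fderiv ℝ u x (e3 i) i = 0

/-- A matrix-valued field is skew-symmetric. -/
def Skew (d : E3 → Fin 3 → Fin 3 → ℝ) : Prop := ∀ x i j, d x i j = - d x j i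

/-- A (matrix-valued) field has bounded mean oscillation. -/
def IsBMO (d : E3 → Fin 3 → Fin 3 → ℝ) : Prop :=
  (∀ (x₀ : E3) (r : ℝ), IntegrableOn d (ball x₀ r) volume) ∧
  ∃ C : ℝ, ∀ (x₀ : E3) (r : ℝ), 0 < r →
    (volume (ball x₀ r)).toReal⁻¹ *
      ∫ x in ball x₀ r, ‖d x - ⨍ y in ball x₀ r, d y‖ ≤ C

/-- `u = div d`, i.e. `u_i = d_{ij,j}`. -/
def IsDivOf (d : E3 → Fin 3 → Fin 3 → ℝ) (u : E3 → E3) : Prop :=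
  ∀ x i, u x i = ∑ j, fderiv ℝ d x (e3 j) i j

/-- Stationary Navier–Stokes: `u·∇u − Δu = ∇p` componentwise. -/
def NSE (u : E3 → E3) (p : E3 → ℝ) : Prop :=
  ∀ x i, fderiv ℝ u x (u x) i
    - ∑ j, fderiv ℝ (fun y => fderiv ℝ u y (e3 j) i) x (e3 j)
    = fderiv ℝ p x (e3 i)

open Topology
open scoped ENNReal

namespace MeasureTheory

variable {α : Type*} [MeasurableSpace α] {μ : Measure α} {f : α → ℝ} {p q : ℝ}

theorem setIntegral_le_setIntegral_rpow_mul_measureReal (hpq : p.HolderConjugate q)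
    (hf0 : 0 ≤ f) (hf : MemLp f (ENNReal.ofReal p) μ) {s : Set α} (hs : μ s ≠ ∞) :
    ∫ x in s, f x ∂μ ≤ (∫ x in s, f x ^ p ∂μ) ^ (1 / p) * μ.real s ^ (1 / q) := by
  have : IsFiniteMeasure (μ.restrict s) := isFiniteMeasure_restrict.2 hs
  simpa [measureReal_def] using integral_mul_le_Lp_mul_Lq_of_nonneg (μ := μ.restrict s) hpq
    (ae_of_all _ hf0) (ae_of_all _ fun _ => zero_le_one) (hf.restrict s) (memLp_const 1)

theorem MemLp.integrable_rpow_of_nonneg (hp : 0 < p) (hf0 : 0 ≤ f)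
    (hf : MemLp f (ENNReal.ofReal p) μ) : Integrable (fun x => f x ^ p) μ := by
  have := hf.integrable_norm_rpow (by simpa using hp) (by simp)
  simpa [abs_of_nonneg (hf0 _), ENNReal.toReal_ofReal hp.le] using this

theorem MemLp.integrableOn_of_measure_ne_top {E : Type*} [NormedAddCommGroup E] {g : α → E}
    {r : ℝ≥0∞} (hr : 1 ≤ r) (hg : MemLp g r μ) {s : Set α} (hs : μ s ≠ ∞) :
    IntegrableOn g s μ :=
  have : IsFiniteMeasure (μ.restrict s) := isFiniteMeasure_restrict.2 hs
  (hg.restrict s).integrable hr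

theorem Integrable.exists_setIntegral_compl_lt {g : α → ℝ} (hg : Integrable g μ) (hg0 : 0 ≤ g)
    {δ : ℝ} (hδ : 0 < δ) :
    ∃ t, MeasurableSet t ∧ μ t < ∞ ∧ ∫ x in tᶜ, g x ∂μ < δ := by
  obtain ⟨t, ht, htμ, htδ⟩ := exists_setLIntegral_compl_lt (μ := μ)
    (f := fun x => ENNReal.ofReal (g x)) hg.lintegral_lt_top.ne
    (ENNReal.ofReal_pos.2 hδ).ne'
  refine ⟨t, ht, htμ, ?_⟩
  rwa [← ofReal_integral_eq_lintegral_ofReal hg.integrableOn (ae_of_all _ hg0),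
    ENNReal.ofReal_lt_ofReal_iff hδ] at htδ

theorem setIntegral_le_add_setIntegral_compl_rpow (hpq : p.HolderConjugate q) (hf0 : 0 ≤ f)
    (hf : MemLp f (ENNReal.ofReal p) μ) {s t : Set α} (hs : μ s ≠ ∞) (ht : MeasurableSet t)
    (htμ : μ t ≠ ∞) :
    ∫ x in s, f x ∂μ ≤
      ∫ x in t, f x ∂μ + (∫ x in tᶜ, f x ^ p ∂μ) ^ (1 / p) * μ.real s ^ (1 / q) := by
  have hp1 : 1 ≤ ENNReal.ofReal p := by simpa using hpq.lt.le
  have hfp := hf.integrable_rpow_of_nonneg hpq.pos hf0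
  rw [← integral_inter_add_sdiff ht (hf.integrableOn_of_measure_ne_top hp1 hs)]
  gcongr ?_ + ?_
  · exact setIntegral_mono_set (hf.integrableOn_of_measure_ne_top hp1 htμ)
      (ae_of_all _ fun x => hf0 x) (Eventually.of_forall Set.inter_subset_right)
  · have hsub : μ.real (s \ t) ≤ μ.real s := measureReal_mono Set.sdiff_subset hs
    have htail : ∫ x in s \ t, f x ^ p ∂μ ≤ ∫ x in tᶜ, f x ^ p ∂μ :=
      setIntegral_mono_set hfp.integrableOn (ae_of_all _ fun x => rpow_nonneg (hf0 x) p)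
        (Eventually.of_forall fun x hx => hx.2)
    have hnn : 0 ≤ ∫ x in s \ t, f x ^ p ∂μ :=
      setIntegral_nonneg_of_ae_restrict (ae_of_all _ fun x => rpow_nonneg (hf0 x) p)
    have hp : 0 ≤ 1 / p := one_div_nonneg.2 hpq.nonneg
    have hq : 0 ≤ 1 / q := one_div_nonneg.2 hpq.symm.nonneg
    calc ∫ x in s \ t, f x ∂μ
        ≤ (∫ x in s \ t, f x ^ p ∂μ) ^ (1 / p) * μ.real (s \ t) ^ (1 / q) :=
          setIntegral_le_setIntegral_rpow_mul_measureReal hpq hf0 hf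
            (measure_ne_top_of_subset Set.sdiff_subset hs)
      _ ≤ (∫ x in tᶜ, f x ^ p ∂μ) ^ (1 / p) * μ.real s ^ (1 / q) :=
          mul_le_mul (rpow_le_rpow hnn htail hp) (rpow_le_rpow measureReal_nonneg hsub hq)
            (rpow_nonneg measureReal_nonneg _) (rpow_nonneg (hnn.trans htail) _)

theorem tendsto_setIntegral_div_measureReal_rpow (hpq : p.HolderConjugate q) (hf0 : 0 ≤ f)
    (hf : MemLp f (ENNReal.ofReal p) μ) {ι : Type*} {l : Filter ι} {s : ι → Set α}
    (hs : Tendsto (fun i => μ.real (s i)) l atTop) :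
    Tendsto (fun i => (∫ x in s i, f x ∂μ) / μ.real (s i) ^ (1 / q)) l (𝓝 0) := by
  have hM : Tendsto (fun i => μ.real (s i) ^ (1 / q)) l atTop :=
    (tendsto_rpow_atTop (one_div_pos.2 hpq.symm.pos)).comp hs
  refine tendsto_order.2 ⟨fun a ha => Eventually.of_forall fun i => ha.trans_le ?_, fun ε hε => ?_⟩
  · exact div_nonneg (integral_nonneg fun x => hf0 x) (rpow_nonneg measureReal_nonneg _)
  obtain ⟨t, ht, htμ, htail⟩ :=
    (hf.integrable_rpow_of_nonneg hpq.pos hf0).exists_setIntegral_compl_lt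
      (fun x => rpow_nonneg (hf0 x) p) (rpow_pos_of_pos (half_pos hε) p)
  have htail' : (∫ x in tᶜ, f x ^ p ∂μ) ^ (1 / p) ≤ ε / 2 := by
    rw [one_div, rpow_inv_le_iff_of_pos (integral_nonneg fun x => rpow_nonneg (hf0 x) p)
      (half_pos hε).le hpq.pos]
    exact htail.le
  have hC : Tendsto (fun i => (∫ x in t, f x ∂μ) / μ.real (s i) ^ (1 / q)) l (𝓝 0) :=
    tendsto_const_nhds.div_atTop hM
  filter_upwards [hC.eventually (gt_mem_nhds (half_pos hε)), hs.eventually_gt_atTop 0,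
    hM.eventually_gt_atTop 0] with i hCi hsi hMi
  have hsi' : μ (s i) ≠ ∞ := (ENNReal.toReal_pos_iff.1 hsi).2.ne
  calc (∫ x in s i, f x ∂μ) / μ.real (s i) ^ (1 / q)
      ≤ (∫ x in t, f x ∂μ + ε / 2 * μ.real (s i) ^ (1 / q)) / μ.real (s i) ^ (1 / q) := by
        gcongr
        refine (setIntegral_le_add_setIntegral_compl_rpow hpq hf0 hf hsi' ht htμ.ne).trans ?_
        gcongr
    _ = (∫ x in t, f x ∂μ) / μ.real (s i) ^ (1 / q) + ε / 2 := by field_simp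
    _ < ε := by linarith

end MeasureTheory

namespace MeasureTheory.Measure

variable {E : Type*} [NormedAddCommGroup E] [NormedSpace ℝ E] [FiniteDimensional ℝ E]
  [MeasurableSpace E] [BorelSpace E] [Nontrivial E] (μ : Measure E) [μ.IsAddHaarMeasure]

theorem addHaar_real_ball (x : E) {r : ℝ} (hr : 0 ≤ r) :
    μ.real (ball x r) = r ^ Module.finrank ℝ E * μ.real (ball 0 1) := by
  rw [← addHaar_real_closedBall_eq_addHaar_real_ball, addHaar_real_closedBall μ x hr]

theorem tendsto_addHaar_real_ball_atTop (x : E) :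
    Tendsto (fun r => μ.real (ball x r)) atTop atTop := by
  have hκ : 0 < μ.real (ball (0 : E) 1) :=
    ENNReal.toReal_pos (measure_ball_pos μ 0 one_pos).ne' measure_ball_lt_top.ne
  refine Tendsto.congr' ?_
    ((tendsto_pow_atTop (Module.finrank_pos (R := ℝ) (M := E)).ne').atTop_mul_const hκ)
  filter_upwards [eventually_ge_atTop 0] with r hr
  exact (addHaar_real_ball μ x hr).symm

end MeasureTheory.Measure

section ReverseHolder

variable {E : Type*} [NormedAddCommGroup E] [NormedSpace ℝ E] [FiniteDimensional ℝ E]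
  [MeasurableSpace E] [BorelSpace E] [Nontrivial E] {μ : Measure E} [μ.IsAddHaarMeasure]
  {f : E → ℝ} {p q c : ℝ} {x₀ : E}

open Module Measure

theorem setIntegral_rpow_ball_le_of_reverseHolder {r : ℝ} (hpq : p.HolderConjugate q)
    (hf0 : 0 ≤ f)
    (hrh : (μ.real (ball x₀ r))⁻¹ * ∫ x in ball x₀ r, f x ^ p ∂μ ≤
      c * ((μ.real (ball x₀ (2 * r)))⁻¹ * ∫ x in ball x₀ (2 * r), f x ∂μ) ^ p)
    (hr : 0 < r) :
    ∫ x in ball x₀ r, f x ^ p ∂μ ≤ c / 2 ^ finrank ℝ E *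
      ((∫ x in ball x₀ (2 * r), f x ∂μ) / μ.real (ball x₀ (2 * r)) ^ (1 / q)) ^ p := by
  set V := μ.real (ball x₀ r)
  set W := μ.real (ball x₀ (2 * r))
  set G := ∫ x in ball x₀ (2 * r), f x ∂μ
  have hV : 0 < V := ENNReal.toReal_pos (measure_ball_pos μ x₀ hr).ne' measure_ball_lt_top.ne
  have hWV : W = 2 ^ finrank ℝ E * V := by
    simp only [W, V, addHaar_real_ball μ x₀ hr.le,
      addHaar_real_ball μ x₀ (by positivity : 0 ≤ 2 * r), mul_pow, mul_assoc]
  have hW : 0 < W := by rw [hWV]; positivity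
  have hG : 0 ≤ G := integral_nonneg fun x => hf0 x
  have hexp : 1 / q * p = p - 1 := by
    rw [one_div, ← hpq.one_sub_inv, sub_mul, inv_mul_cancel₀ hpq.ne_zero, one_mul]
  have hpow : (W⁻¹ * G) ^ p = (G / W ^ (1 / q)) ^ p / W := by
    rw [inv_mul_eq_div, div_rpow hG hW.le, div_rpow hG (rpow_nonneg hW.le _), ← rpow_mul hW.le,
      hexp, rpow_sub_one hW.ne', div_div, div_mul_cancel₀ _ hW.ne']
  rw [hpow, inv_mul_le_iff₀ hV] at hrh
  refine hrh.trans_eq ?_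
  rw [hWV]
  field_simp

theorem ae_eq_zero_of_reverseHolder (hpq : p.HolderConjugate q) (hf0 : 0 ≤ f)
    (hf : MemLp f (ENNReal.ofReal p) μ)
    (hrh : ∀ R, 0 < R → (μ.real (ball x₀ (R / 2)))⁻¹ * ∫ x in ball x₀ (R / 2), f x ^ p ∂μ ≤
      c * ((μ.real (ball x₀ R))⁻¹ * ∫ x in ball x₀ R, f x ∂μ) ^ p) :
    f =ᵐ[μ] 0 := by
  have hfp := hf.integrable_rpow_of_nonneg hpq.pos hf0
  have hF : Tendsto (fun n : ℕ => ∫ x in ball x₀ n, f x ^ p ∂μ) atTop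
      (𝓝 (∫ x, f x ^ p ∂μ)) := by
    have := tendsto_setIntegral_of_monotone (s := fun n : ℕ => ball x₀ n)
      (fun _ => measurableSet_ball) (fun m n hmn => ball_subset_ball (Nat.cast_le.2 hmn))
      (by rw [iUnion_ball_nat]; exact hfp.integrableOn)
    rwa [iUnion_ball_nat, setIntegral_univ] at this
  have hW : Tendsto (fun n : ℕ => μ.real (ball x₀ (2 * n))) atTop atTop :=
    (tendsto_addHaar_real_ball_atTop μ x₀).comp
      (tendsto_natCast_atTop_atTop.const_mul_atTop two_pos)
  set u : ℕ → ℝ := fun n => (∫ x in ball x₀ (2 * n), f x ∂μ) / μ.real (ball x₀ (2 * n)) ^ (1 / q)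
  have hbound : Tendsto (fun n => c / 2 ^ finrank ℝ E * u n ^ p) atTop (𝓝 0) := by
    simpa only [zero_rpow hpq.ne_zero, mul_zero] using
      ((tendsto_setIntegral_div_measureReal_rpow hpq hf0 hf hW).rpow_const
        (Or.inr hpq.nonneg)).const_mul (c / 2 ^ finrank ℝ E)
  have hle : ∀ᶠ n : ℕ in atTop, ∫ x in ball x₀ n, f x ^ p ∂μ ≤ c / 2 ^ finrank ℝ E * u n ^ p := by
    filter_upwards [eventually_gt_atTop 0] with n hn
    have hn : (0 : ℝ) < n := Nat.cast_pos.2 hn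
    refine setIntegral_rpow_ball_le_of_reverseHolder hpq hf0 ?_ hn
    simpa only [mul_div_cancel_left₀ (n : ℝ) (two_ne_zero' ℝ)] using hrh (2 * n) (by positivity)
  have hI : ∫ x, f x ^ p ∂μ = 0 :=
    (le_of_tendsto_of_tendsto hF hbound hle).antisymm
      (integral_nonneg fun x => rpow_nonneg (hf0 x) p)
  filter_upwards [(integral_eq_zero_iff_of_nonneg (fun x => rpow_nonneg (hf0 x) p) hfp).1 hI]
    with x hx
  exact (rpow_eq_zero (hf0 x) hpq.ne_zero).1 hx

end ReverseHolder

/-- A nonnegative `L^{4/3}` function satisfying a global reverse Hölder inequality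
on all balls vanishes a.e. -/
theorem stmt6 (h : E3 → ℝ) (hpos : ∀ x, 0 ≤ h x)
    (hmem : MemLp h (ENNReal.ofReal (4 / 3)) volume) (c : ℝ)
    (hrh : ∀ (x₀ : E3) (R : ℝ), 0 < R →
      (volume (ball x₀ (R / 2))).toReal⁻¹ *
          ∫ x in ball x₀ (R / 2), h x ^ ((4 : ℝ) / 3) ≤
        c * ((volume (ball x₀ R)).toReal⁻¹ * ∫ x in ball x₀ R, h x) ^ ((4 : ℝ) / 3)) :
    h =ᵐ[volume] 0 := by
  have hpq : (4 / 3 : ℝ).HolderConjugate 4 := Real.holderConjugate_iff.2 ⟨by norm_num, by norm_num⟩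
  exact ae_eq_zero_of_reverseHolder hpq hpos hmem (hrh 0)
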